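/- arXiv:2306.05724 — 3 statements merged into one kernel-verified Lean document; each statement's English description precedes it below -/
import Mathlib

section
/- The gap between the local entropy game and the marginalized entropy game is a KL-divergence: for every coalition S ⊆ Fin d and every x ∈ X, v_H(S, x) − v_{H*}(S, x) = Σ_{x' : x'_S = x_S} Σ_y P(x' | x_S) · p(y|x') · log( p(y|x') / p(y|x_S) ), where x'_S = x_S means x'_j = x_j for all j ∈ S. -/
open Finset Real

noncomputable section

/-- Conditional pmf `p(y | x_S)` in the finite discrete setting. -/
def condP {d : ℕ} {Xf : Fin d → Type*} {Y : Type*} [∀ j, Fintype (Xf j)] [Fintype Y]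
    [∀ j, DecidableEq (Xf j)]
    (p : ((∀ j, Xf j) × Y) → ℝ) (S : Finset (Fin d)) (x : ∀ j, Xf j) (y : Y) : ℝ :=
  (∑ x' : ∀ j, Xf j, if ∀ j ∈ S, x' j = x j then p (x', y) else 0) /
  (∑ x' : ∀ j, Xf j, if ∀ j ∈ S, x' j = x j then ∑ y' : Y, p (x', y') else 0)

/-- Marginal feature pmf `P(x)`. -/
def margP {d : ℕ} {Xf : Fin d → Type*} {Y : Type*} [Fintype Y]
    (p : ((∀ j, Xf j) × Y) → ℝ) (x : ∀ j, Xf j) : ℝ :=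
  ∑ y : Y, p (x, y)

/-- Local conditional entropy `H(Y | x_S)`. -/
def entY {d : ℕ} {Xf : Fin d → Type*} {Y : Type*} [∀ j, Fintype (Xf j)] [Fintype Y]
    [∀ j, DecidableEq (Xf j)]
    (p : ((∀ j, Xf j) × Y) → ℝ) (S : Finset (Fin d)) (x : ∀ j, Xf j) : ℝ :=
  -∑ y : Y, condP p S x y * Real.log (condP p S x y)

/-- The KL-divergence game `v_KL(S, x) = -D_KL(p(Y|x) ‖ p(Y|x_S))`. -/
def vKL {d : ℕ} {Xf : Fin d → Type*} {Y : Type*} [∀ j, Fintype (Xf j)] [Fintype Y]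
    [∀ j, DecidableEq (Xf j)]
    (p : ((∀ j, Xf j) × Y) → ℝ) (S : Finset (Fin d)) (x : ∀ j, Xf j) : ℝ :=
  -∑ y : Y, condP p Finset.univ x y *
      Real.log (condP p Finset.univ x y / condP p S x y)

/-- The cross-entropy game `v_CE(S, x) = -H(p(Y|x), p(Y|x_S))`. -/
def vCE {d : ℕ} {Xf : Fin d → Type*} {Y : Type*} [∀ j, Fintype (Xf j)] [Fintype Y]
    [∀ j, DecidableEq (Xf j)]
    (p : ((∀ j, Xf j) × Y) → ℝ) (S : Finset (Fin d)) (x : ∀ j, Xf j) : ℝ :=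
  ∑ y : Y, condP p Finset.univ x y * Real.log (condP p S x y)

/-- The information-gain game `v_IG(S, x) = -H(Y | x_S)`. -/
def vIG {d : ℕ} {Xf : Fin d → Type*} {Y : Type*} [∀ j, Fintype (Xf j)] [Fintype Y]
    [∀ j, DecidableEq (Xf j)]
    (p : ((∀ j, Xf j) × Y) → ℝ) (S : Finset (Fin d)) (x : ∀ j, Xf j) : ℝ :=
  -entY p S x

/-- The local entropy game `v_H(S, x) = H(Y | x_S)`. -/
def vH {d : ℕ} {Xf : Fin d → Type*} {Y : Type*} [∀ j, Fintype (Xf j)] [Fintype Y]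
    [∀ j, DecidableEq (Xf j)]
    (p : ((∀ j, Xf j) × Y) → ℝ) (S : Finset (Fin d)) (x : ∀ j, Xf j) : ℝ :=
  entY p S x

/-- The marginalized entropy game
`v_{H*}(S, x) = E[H(Y | x') | x'_S = x_S] = ∑_{x' : x'_S = x_S} P(x' | x_S) H(Y|x')`. -/
def vHstar {d : ℕ} {Xf : Fin d → Type*} {Y : Type*} [∀ j, Fintype (Xf j)] [Fintype Y]
    [∀ j, DecidableEq (Xf j)]
    (p : ((∀ j, Xf j) × Y) → ℝ) (S : Finset (Fin d)) (x : ∀ j, Xf j) : ℝ :=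
  ∑ x' : ∀ j, Xf j,
    if ∀ j ∈ S, x' j = x j then
      (margP p x' /
          ∑ x'' : ∀ j, Xf j, if ∀ j ∈ S, x'' j = x j then margP p x'' else 0) *
        entY p Finset.univ x'
    else 0

/-- The Shapley value `φ_v(j, x)` of feature `j` at point `x` for the game `v`. -/
def shapley {d : ℕ} {X : Type*} (v : Finset (Fin d) → X → ℝ) (j : Fin d) (x : X) : ℝ :=
  ∑ S ∈ (Finset.univ.erase j).powerset,
    ((S.card.factorial : ℝ) * ((d - S.card - 1).factorial : ℝ) / (d.factorial : ℝ)) *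
      (v (insert j S) x - v S x)

/-!
Given `x_S`, the conditional `p(· | x_S)` is the mixture of the conditionals `p(· | x')` over
the fiber `x'_S = x_S`, weighted by `P(x' | x_S)`. For any mixture `q = ∑ᵢ wᵢ rᵢ` of nonvanishing
functions, splitting `log (rᵢ / q) = log rᵢ - log q` and summing the cross term over `i` first
gives `∑ᵢ wᵢ ∑_y rᵢ log (rᵢ / q) = H(q) - ∑ᵢ wᵢ H(rᵢ)`; no normalisation is needed.
-/

theorem sum_sum_mul_log_div_mixture {ι Y : Type*} [Fintype Y] (s : Finset ι) (w : ι → ℝ)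
    (r : ι → Y → ℝ) (q : Y → ℝ) (hq : ∀ y, q y = ∑ i ∈ s, w i * r i y)
    (hr : ∀ i ∈ s, ∀ y, r i y ≠ 0) (hq₀ : ∀ y, q y ≠ 0) :
    ∑ i ∈ s, ∑ y, w i * (r i y * log (r i y / q y)) =
      -∑ y, q y * log (q y) - ∑ i ∈ s, w i * -∑ y, r i y * log (r i y) := by
  have hlog : ∀ i ∈ s, ∀ y, log (r i y / q y) = log (r i y) - log (q y) :=
    fun i hi y => log_div (hr i hi y) (hq₀ y)
  have hcross : ∑ i ∈ s, ∑ y, w i * (r i y * log (q y)) = ∑ y, q y * log (q y) := by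
    rw [sum_comm]
    refine sum_congr rfl fun y _ => ?_
    simp only [hq y, sum_mul, mul_assoc]
  calc ∑ i ∈ s, ∑ y, w i * (r i y * log (r i y / q y))
      = ∑ i ∈ s, ∑ y, w i * (r i y * log (r i y)) - ∑ i ∈ s, ∑ y, w i * (r i y * log (q y)) := by
        rw [← sum_sub_distrib]
        refine sum_congr rfl fun i hi => ?_
        rw [← sum_sub_distrib]
        simp only [hlog i hi, mul_sub]
    _ = _ := by
        rw [hcross]
        simp only [mul_neg, sum_neg_distrib, mul_sum]
        ring

theorem margP_pos {d : ℕ} {Xf : Fin d → Type*} {Y : Type*} [Fintype Y]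
    {p : ((∀ j, Xf j) × Y) → ℝ} (hpos : ∀ z, 0 < p z) (x : ∀ j, Xf j) (y : Y) :
    0 < margP p x :=
  (hpos (x, y)).trans_le <| single_le_sum (fun y' _ => (hpos (x, y')).le) (mem_univ y)

def fiber {d : ℕ} {Xf : Fin d → Type*} [∀ j, Fintype (Xf j)] [∀ j, DecidableEq (Xf j)]
    (S : Finset (Fin d)) (x : ∀ j, Xf j) : Finset (∀ j, Xf j) :=
  univ.filter fun x' => ∀ j ∈ S, x' j = x j

section Conditional

variable {d : ℕ} {Xf : Fin d → Type*} {Y : Type*} [∀ j, Fintype (Xf j)] [Fintype Y]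
  [∀ j, DecidableEq (Xf j)] (p : ((∀ j, Xf j) × Y) → ℝ)

theorem condP_eq_div_sum_fiber (S : Finset (Fin d)) (x : ∀ j, Xf j) (y : Y) :
    condP p S x y = (∑ x' ∈ fiber S x, p (x', y)) / ∑ x' ∈ fiber S x, margP p x' := by
  simp only [condP, fiber, sum_filter, margP]

theorem condP_univ (x : ∀ j, Xf j) (y : Y) : condP p univ x y = p (x, y) / margP p x := by
  have hfiber : fiber univ x = {x} := by
    ext x'
    simp [fiber, funext_iff]
  rw [condP_eq_div_sum_fiber, hfiber, sum_singleton, sum_singleton]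

theorem mem_fiber_self (S : Finset (Fin d)) (x : ∀ j, Xf j) : x ∈ fiber S x := by
  simp [fiber]

theorem condP_pos (hpos : ∀ z, 0 < p z) (S : Finset (Fin d)) (x : ∀ j, Xf j) (y : Y) :
    0 < condP p S x y := by
  rw [condP_eq_div_sum_fiber]
  exact div_pos (sum_pos (fun x' _ => hpos _) ⟨x, mem_fiber_self S x⟩)
    (sum_pos (fun x' _ => margP_pos hpos x' y) ⟨x, mem_fiber_self S x⟩)

theorem condP_eq_sum_fiber_mul_condP_univ (hpos : ∀ z, 0 < p z) (S : Finset (Fin d))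
    (x : ∀ j, Xf j) (y : Y) :
    condP p S x y = ∑ x' ∈ fiber S x,
      margP p x' / (∑ x'' ∈ fiber S x, margP p x'') * condP p univ x' y := by
  rw [condP_eq_div_sum_fiber, sum_div]
  refine sum_congr rfl fun x' _ => ?_
  rw [condP_univ, div_mul_div_comm, mul_comm, mul_div_mul_right _ _ (margP_pos hpos x' y).ne']

end Conditional

theorem entropy_game_gap_is_kl_general {d : ℕ} {Xf : Fin d → Type*} {Y : Type*}
    [∀ j, Fintype (Xf j)] [∀ j, DecidableEq (Xf j)]
    [Fintype Y]
    (p : ((∀ j, Xf j) × Y) → ℝ)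
    (hpos : ∀ z : ((∀ j, Xf j) × Y), 0 < p z)
    (S : Finset (Fin d)) (x : ∀ j, Xf j) :
    vH p S x - vHstar p S x =
      ∑ x' : ∀ j, Xf j,
        if ∀ j ∈ S, x' j = x j then
          ∑ y : Y,
            (margP p x' /
                ∑ x'' : ∀ j, Xf j, if ∀ j ∈ S, x'' j = x j then margP p x'' else 0) *
              (condP p Finset.univ x' y *
                Real.log (condP p Finset.univ x' y / condP p S x y))
        else 0 := by
  have hgap := sum_sum_mul_log_div_mixture (fiber S x)
    (fun x' => margP p x' / ∑ x'' ∈ fiber S x, margP p x'') (condP p univ) (condP p S x)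
    (condP_eq_sum_fiber_mul_condP_univ p hpos S x)
    (fun x' _ y => (condP_pos p hpos univ x' y).ne') (fun y => (condP_pos p hpos S x y).ne')
  simp only [fiber, sum_filter] at hgap
  rw [hgap]
  rfl

/-- the gap between the local entropy game and the marginalized entropy
game is a conditional KL-divergence. -/
theorem entropy_game_gap_is_kl {d : ℕ} (hd : 1 ≤ d) {Xf : Fin d → Type*} {Y : Type*}
    [∀ j, Fintype (Xf j)] [∀ j, Nonempty (Xf j)] [∀ j, DecidableEq (Xf j)]
    [Fintype Y] [Nonempty Y]
    (p : ((∀ j, Xf j) × Y) → ℝ)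
    (hpos : ∀ z : ((∀ j, Xf j) × Y), 0 < p z)
    (hsum : ∑ z : ((∀ j, Xf j) × Y), p z = 1)
    (S : Finset (Fin d)) (x : ∀ j, Xf j) :
    vH p S x - vHstar p S x =
      ∑ x' : ∀ j, Xf j,
        if ∀ j ∈ S, x' j = x j then
          ∑ y : Y,
            (margP p x' /
                ∑ x'' : ∀ j, Xf j, if ∀ j ∈ S, x'' j = x j then margP p x'' else 0) *
              (condP p Finset.univ x' y *
                Real.log (condP p Finset.univ x' y / condP p S x y))
        else 0 :=
  entropy_game_gap_is_kl_general p hpos S x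
end
end

section
/- Conditional independence characterizes vanishing marginal contributions in the information-gain game: for every j ∈ Fin d and S ⊆ Fin d with j ∉ S, the condition (for all x ∈ X and y ∈ Y, p(y | x_{S∪{j}}) = p(y | x_S)) holds if and only if Δ_{v_IG}(S, j, x) = 0 for all x ∈ X. -/
open Finset Real

noncomputable section

/-! If `Y | x_S` is the mixture over `t` of the laws `Y | x_S, x_j = t`, and every component has
the entropy of the mixture, then equality holds in Jensen's inequality for the strictly concave
`negMulLog` at every `y`, which forces all components to coincide. -/

open Function

lemma eq_sum_mul_of_sum_negMulLog_eq {ι Y : Type*} [Fintype ι] [Fintype Y]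
    {w : ι → ℝ} {q : ι → Y → ℝ} (hw : ∀ i, 0 < w i) (hw₁ : ∑ i, w i = 1)
    (hq : ∀ i y, 0 ≤ q i y)
    (hent : ∀ i, ∑ y, negMulLog (q i y) = ∑ y, negMulLog (∑ k, w k * q k y)) (i : ι) (y : Y) :
    q i y = ∑ k, w k * q k y := by
  have jensen : ∀ y, ∑ k, w k * negMulLog (q k y) ≤ negMulLog (∑ k, w k * q k y) := fun y =>
    concaveOn_negMulLog.le_map_sum (fun k _ => (hw k).le) hw₁ (fun k _ => hq k y)
  have total : ∑ y, ∑ k, w k * negMulLog (q k y) = ∑ y, negMulLog (∑ k, w k * q k y) := by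
    simp_rw [sum_comm (γ := Y), ← mul_sum, hent, ← sum_mul, hw₁, one_mul]
  have jensen_eq := (sum_eq_sum_iff_of_le fun y _ => jensen y).1 total y (mem_univ y)
  have hconst := strictConcaveOn_negMulLog.eq_of_map_sum_eq (fun k _ => hw k) hw₁
    (fun k _ => hq k y) (by simpa only [smul_eq_mul] using jensen_eq.ge)
  calc q i y = ∑ k, w k * q i y := by rw [← sum_mul, hw₁, one_mul]
    _ = ∑ k, w k * q k y := sum_congr rfl fun k _ => by rw [hconst (mem_univ i) (mem_univ k)]

section CondP

variable {d : ℕ} {Xf : Fin d → Type*} {Y : Type*} [∀ j, Fintype (Xf j)] [Fintype Y]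
    [∀ j, DecidableEq (Xf j)]

/-- `P(X_S = x_S, Y = y)` -/
def cylJoint (p : ((∀ j, Xf j) × Y) → ℝ) (S : Finset (Fin d)) (x : ∀ j, Xf j) (y : Y) : ℝ :=
  ∑ x' : ∀ j, Xf j, if ∀ j ∈ S, x' j = x j then p (x', y) else 0

/-- `P(X_S = x_S)` -/
def cylMarg (p : ((∀ j, Xf j) × Y) → ℝ) (S : Finset (Fin d)) (x : ∀ j, Xf j) : ℝ :=
  ∑ x' : ∀ j, Xf j, if ∀ j ∈ S, x' j = x j then ∑ y' : Y, p (x', y') else 0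

lemma condP_eq_cylJoint_div_cylMarg (p : ((∀ j, Xf j) × Y) → ℝ) (S : Finset (Fin d))
    (x : ∀ j, Xf j) (y : Y) : condP p S x y = cylJoint p S x y / cylMarg p S x :=
  rfl

omit [∀ j, Fintype (Xf j)] [∀ j, DecidableEq (Xf j)] in
lemma forall_mem_insert_eq_update_iff {j : Fin d} {S : Finset (Fin d)} (hjS : j ∉ S)
    (x x' : ∀ i, Xf i) (t : Xf j) :
    (∀ i ∈ insert j S, x' i = update x j t i) ↔ x' j = t ∧ ∀ i ∈ S, x' i = x i := by
  rw [forall_mem_insert, update_self]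
  refine and_congr_right fun _ => forall₂_congr fun i hi => ?_
  rw [update_of_ne (ne_of_mem_of_not_mem hi hjS)]

omit [Fintype Y] in
lemma sum_ite_eq_sum_sum_ite_insert {M : Type*} [AddCommMonoid M] {j : Fin d}
    {S : Finset (Fin d)} (hjS : j ∉ S) (x : ∀ i, Xf i) (f : (∀ i, Xf i) → M) :
    ∑ x', (if ∀ i ∈ S, x' i = x i then f x' else 0) =
      ∑ t : Xf j, ∑ x', if ∀ i ∈ insert j S, x' i = update x j t i then f x' else 0 := by
  rw [sum_comm]
  refine sum_congr rfl fun x' _ => ?_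
  simp only [forall_mem_insert_eq_update_iff hjS, ite_and, sum_ite_eq, mem_univ, if_true]

lemma sum_cylMarg_update {p : ((∀ j, Xf j) × Y) → ℝ} {j : Fin d} {S : Finset (Fin d)}
    (hjS : j ∉ S) (x : ∀ i, Xf i) :
    ∑ t : Xf j, cylMarg p (insert j S) (update x j t) = cylMarg p S x :=
  (sum_ite_eq_sum_sum_ite_insert hjS x _).symm

omit [Fintype Y] in
lemma sum_cylJoint_update {p : ((∀ j, Xf j) × Y) → ℝ} {j : Fin d} {S : Finset (Fin d)}
    (hjS : j ∉ S) (x : ∀ i, Xf i) (y : Y) :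
    ∑ t : Xf j, cylJoint p (insert j S) (update x j t) y = cylJoint p S x y :=
  (sum_ite_eq_sum_sum_ite_insert hjS x _).symm

lemma cylMarg_pos [Nonempty Y] {p : ((∀ j, Xf j) × Y) → ℝ} (hpos : ∀ z, 0 < p z)
    (S : Finset (Fin d)) (x : ∀ j, Xf j) : 0 < cylMarg p S x :=
  sum_pos' (fun _ _ => ite_nonneg (sum_nonneg fun _ _ => (hpos _).le) le_rfl)
    ⟨x, mem_univ x, by rw [if_pos fun _ _ => rfl]; exact sum_pos (fun _ _ => hpos _) univ_nonempty⟩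

lemma condP_nonneg {p : ((∀ j, Xf j) × Y) → ℝ} (hpos : ∀ z, 0 < p z)
    (S : Finset (Fin d)) (x : ∀ j, Xf j) (y : Y) : 0 ≤ condP p S x y :=
  div_nonneg (sum_nonneg fun _ _ => ite_nonneg (hpos _).le le_rfl)
    (sum_nonneg fun _ _ => ite_nonneg (sum_nonneg fun _ _ => (hpos _).le) le_rfl)

lemma condP_congr (p : ((∀ j, Xf j) × Y) → ℝ) (S : Finset (Fin d)) {x x' : ∀ j, Xf j}
    (h : ∀ i ∈ S, x i = x' i) : condP p S x = condP p S x' := by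
  have hS : ∀ z : ∀ j, Xf j, (∀ i ∈ S, z i = x i) ↔ ∀ i ∈ S, z i = x' i := fun z =>
    forall₂_congr fun i hi => by rw [h i hi]
  funext y
  simp only [condP, hS]

/-- Law of total probability over the value `t` of the feature `j`. -/
lemma condP_eq_sum_mul_condP_insert [Nonempty Y] {p : ((∀ j, Xf j) × Y) → ℝ}
    (hpos : ∀ z, 0 < p z) {j : Fin d} {S : Finset (Fin d)} (hjS : j ∉ S) (x : ∀ i, Xf i)
    (y : Y) :
    condP p S x y = ∑ t : Xf j, cylMarg p (insert j S) (update x j t) / cylMarg p S x *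
      condP p (insert j S) (update x j t) y := by
  have hmul : ∀ t : Xf j, cylMarg p (insert j S) (update x j t) / cylMarg p S x *
      condP p (insert j S) (update x j t) y =
        cylJoint p (insert j S) (update x j t) y / cylMarg p S x := fun t => by
    rw [condP_eq_cylJoint_div_cylMarg, div_mul_div_cancel₀' (cylMarg_pos hpos _ _).ne']
  rw [sum_congr rfl fun t _ => hmul t, ← sum_div, sum_cylJoint_update hjS,
    condP_eq_cylJoint_div_cylMarg]

lemma entY_eq_sum_negMulLog (p : ((∀ j, Xf j) × Y) → ℝ) (S : Finset (Fin d))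
    (x : ∀ j, Xf j) : entY p S x = ∑ y, negMulLog (condP p S x y) := by
  simp only [entY, negMulLog, neg_mul, sum_neg_distrib]

end CondP

theorem cond_indep_iff_zero_marginal_ig_general {d : ℕ} {Xf : Fin d → Type*} {Y : Type*}
    [∀ j, Fintype (Xf j)] [∀ j, DecidableEq (Xf j)]
    [Fintype Y] [Nonempty Y]
    (p : ((∀ j, Xf j) × Y) → ℝ)
    (hpos : ∀ z : ((∀ j, Xf j) × Y), 0 < p z)
    (j : Fin d) (S : Finset (Fin d)) (hjS : j ∉ S) :
    (∀ (x : ∀ j, Xf j) (y : Y), condP p (insert j S) x y = condP p S x y) ↔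
      ∀ x : ∀ j, Xf j, vIG p (insert j S) x - vIG p S x = 0 := by
  refine ⟨fun h x => by simp only [vIG, entY, h, sub_self], fun h x y => ?_⟩
  have hmix := condP_eq_sum_mul_condP_insert hpos hjS x
  have hS_update : ∀ t : Xf j, condP p S (update x j t) = condP p S x := fun t =>
    condP_congr p S fun i hi => update_of_ne (ne_of_mem_of_not_mem hi hjS) t x
  have hent : ∀ t : Xf j, ∑ y, negMulLog (condP p (insert j S) (update x j t) y) =
      ∑ y, negMulLog (condP p S x y) := fun t => by
    have := h (update x j t)
    rwa [vIG, vIG, sub_eq_zero, neg_inj, entY_eq_sum_negMulLog, entY_eq_sum_negMulLog,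
      hS_update] at this
  have key := eq_sum_mul_of_sum_negMulLog_eq
    (fun t => div_pos (cylMarg_pos hpos _ _) (cylMarg_pos hpos S x))
    (by rw [← sum_div, sum_cylMarg_update hjS, div_self (cylMarg_pos hpos S x).ne'])
    (fun t => condP_nonneg hpos (insert j S) (update x j t))
    (fun t => by simpa only [← hmix] using hent t) (x j) y
  rwa [update_eq_self, ← hmix] at key

/-- conditional independence characterizes vanishing marginal
contributions in the information-gain game. -/
theorem cond_indep_iff_zero_marginal_ig {d : ℕ} (hd : 1 ≤ d) {Xf : Fin d → Type*} {Y : Type*}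
    [∀ j, Fintype (Xf j)] [∀ j, Nonempty (Xf j)] [∀ j, DecidableEq (Xf j)]
    [Fintype Y] [Nonempty Y]
    (p : ((∀ j, Xf j) × Y) → ℝ)
    (hpos : ∀ z : ((∀ j, Xf j) × Y), 0 < p z)
    (hsum : ∑ z : ((∀ j, Xf j) × Y), p z = 1)
    (j : Fin d) (S : Finset (Fin d)) (hjS : j ∉ S) :
    (∀ (x : ∀ j, Xf j) (y : Y), condP p (insert j S) x y = condP p S x y) ↔
      ∀ x : ∀ j, Xf j, vIG p (insert j S) x - vIG p S x = 0 :=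
  cond_indep_iff_zero_marginal_ig_general p hpos j S hjS
end
end

section
/- Split conformal coverage (upper bound under continuity): let φ_1, …, φ_m, φ_{m+1} be i.i.d. real-valued random variables on a probability space (Ω, F, P) with m ≥ 1, and assume P(φ_i = φ_j) = 0 for all i ≠ j (almost surely no ties). Let α ∈ (0,1), set ℓ := ⌈(m+1)·α/2⌉ and u := ⌈(m+1)·(1−α/2)⌉, and assume 1 ≤ ℓ ≤ u ≤ m. For each ω ∈ Ω, let q_lo(ω) be the ℓ-th smallest and q_hi(ω) the u-th smallest value (counted with multiplicity) among φ_1(ω), …, φ_m(ω). Then P( q_lo ≤ φ_{m+1} ≤ q_hi ) ≤ 1 − α + 2/(m+1). -/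
/-!
Off a null set the values `φ_1, …, φ_{m+1}` are pairwise distinct, and then
`q_lo ≤ φ_{m+1} ≤ q_hi` forces the rank of `φ_{m+1}` (the number of `φ_i` strictly below it)
to lie in `[ℓ, u)`. The law of an i.i.d. vector is invariant under permutations of the
coordinates, so all coordinates are equally likely to have rank `r`; since exactly one of them
does, each has probability `1/(m+1)`. The coverage probability is therefore at most
`(u - ℓ)/(m+1)`, and `u - ℓ < (m+1)(1-α) + 1` by the definition of the ceilings.
-/

open Finset Real

noncomputable section

/-- The `k`-th smallest value (counted with multiplicity) among `g 0, …, g (m-1)`. -/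
noncomputable def orderStat (m : ℕ) (g : Fin m → ℝ) (k : ℕ) : ℝ :=
  (List.insertionSort (· ≤ ·) (List.ofFn g)).getD (k - 1) 0

open MeasureTheory ProbabilityTheory Function

namespace List

variable {α : Type*} [LinearOrder α] {L : List α} {x : α} {j : ℕ}

theorem Pairwise.succ_le_countP_lt (hL : L.Pairwise (· ≤ ·)) (hj : j < L.length)
    (h : L[j] < x) : j + 1 ≤ L.countP (· < x) := by
  have hall : ∀ y ∈ L.take (j + 1), y < x := by
    intro y hy
    obtain ⟨k, hk, rfl⟩ := mem_take_iff_getElem.mp hy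
    have hkj : L[k] ≤ L[j] := hL.rel_get_of_le (a := ⟨k, _⟩) (b := ⟨j, hj⟩) (by simp; omega)
    exact hkj.trans_lt h
  calc j + 1 = (L.take (j + 1)).countP (· < x) := by
        rw [countP_eq_length.mpr (by simpa using hall), length_take]; omega
    _ ≤ L.countP (· < x) := (take_sublist _ _).countP_le

theorem Pairwise.countP_lt_le (hL : L.Pairwise (· ≤ ·)) (hj : j < L.length)
    (h : x ≤ L[j]) : L.countP (· < x) ≤ j := by
  have hnone : (L.drop j).countP (· < x) = 0 := by
    rw [countP_eq_zero]
    intro y hy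
    obtain ⟨k, hk, rfl⟩ := mem_drop_iff_getElem.mp hy
    have hjk : L[j] ≤ L[j + k] := hL.rel_get_of_le (a := ⟨j, hj⟩) (b := ⟨j + k, _⟩) (by simp)
    simpa using h.trans hjk
  calc L.countP (· < x) = (L.take j).countP (· < x) := by
        conv_lhs => rw [← take_append_drop j L, countP_append, hnone, add_zero]
    _ ≤ (L.take j).length := countP_le_length
    _ ≤ j := length_take_le _ _

end List

section OrderStatistic

variable {m k : ℕ} {g : Fin m → ℝ} {x : ℝ}

lemma card_filter_lt_eq_countP_insertionSort (g : Fin m → ℝ) (x : ℝ) :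
    #{i | g i < x} = ((List.ofFn g).insertionSort (· ≤ ·)).countP (· < x) := by
  rw [(List.perm_insertionSort _ _).countP_eq, List.ofFn_eq_map, List.countP_map]
  simp [List.countP_eq_length_filter, Finset.filter, Finset.card, Fin.univ_def,
    Multiset.filter_coe, Function.comp_def]

lemma orderStat_eq_getElem (hk : 1 ≤ k) (hkm : k ≤ m) :
    orderStat m g k = ((List.ofFn g).insertionSort (· ≤ ·))[k - 1]'(by simp; omega) :=
  List.getD_eq_getElem _ _ _

lemma orderStat_mem_range (hk : 1 ≤ k) (hkm : k ≤ m) : orderStat m g k ∈ Set.range g := by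
  rw [orderStat_eq_getElem hk hkm]
  exact List.mem_ofFn.mp ((List.perm_insertionSort _ _).mem_iff.mp (List.getElem_mem _))

lemma le_card_filter_lt_of_orderStat_le (hk : 1 ≤ k) (hkm : k ≤ m) (hx : ∀ i, g i ≠ x)
    (h : orderStat m g k ≤ x) : k ≤ #{i | g i < x} := by
  have hlt : orderStat m g k < x := by
    obtain ⟨i, hi⟩ := orderStat_mem_range hk hkm
    exact h.lt_of_ne (hi ▸ hx i)
  rw [orderStat_eq_getElem hk hkm] at hlt
  rw [card_filter_lt_eq_countP_insertionSort]
  have := (List.pairwise_insertionSort _ _).succ_le_countP_lt _ hlt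
  omega

lemma card_filter_lt_lt_of_le_orderStat (hk : 1 ≤ k) (hkm : k ≤ m)
    (h : x ≤ orderStat m g k) : #{i | g i < x} < k := by
  rw [orderStat_eq_getElem hk hkm] at h
  rw [card_filter_lt_eq_countP_insertionSort]
  have := (List.pairwise_insertionSort _ _).countP_lt_le _ h
  omega

end OrderStatistic

section Rank

variable {ι α : Type*} [Fintype ι] [LinearOrder α] {v : ι → α} {i j : ι}

def rank (v : ι → α) (i : ι) : ℕ := #{j | v j < v i}

lemma rank_lt_card (v : ι → α) (i : ι) : rank v i < Fintype.card ι :=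
  card_lt_univ_of_notMem (x := i) (by simp)

lemma rank_lt_rank (h : v i < v j) : rank v i < rank v j := by
  refine card_lt_card ((ssubset_iff_of_subset fun k hk => ?_).mpr ⟨i, ?_, ?_⟩)
  · simp only [mem_filter, mem_univ, true_and] at hk ⊢
    exact hk.trans h
  · simpa using h
  · simp

lemma rank_injective (hv : Injective v) : Injective (rank v) := by
  intro i j hij
  by_contra hne
  rcases (hv.ne hne).lt_or_gt with h | h
  · exact (rank_lt_rank h).ne hij
  · exact (rank_lt_rank h).ne' hij

lemma exists_rank_eq (hv : Injective v) {r : ℕ} (hr : r < Fintype.card ι) :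
    ∃ i, rank v i = r := by
  let f : ι → Fin (Fintype.card ι) := fun i => ⟨rank v i, rank_lt_card v i⟩
  have hf : Bijective f :=
    (Fintype.bijective_iff_injective_and_card f).mpr
      ⟨fun i j h => rank_injective hv (Fin.val_eq_of_eq h), by simp⟩
  obtain ⟨i, hi⟩ := hf.surjective ⟨r, hr⟩
  exact ⟨i, congrArg Fin.val hi⟩

lemma rank_comp_perm (σ : Equiv.Perm ι) (v : ι → α) (i : ι) :
    rank (v ∘ σ) i = rank v (σ i) :=
  card_equiv σ (by simp)

lemma rank_last {m : ℕ} (v : Fin (m + 1) → α) :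
    rank v (Fin.last m) = #{i : Fin m | v i.castSucc < v (Fin.last m)} := by
  rw [rank, card_filter, card_filter, Fin.sum_univ_castSucc]
  simp

end Rank

section Exchangeable

variable {ι α : Type*} [Fintype ι] [MeasurableSpace α]

def IsExchangeable (ν : Measure (ι → α)) : Prop :=
  ∀ σ : Equiv.Perm ι, ν.map (fun v => v ∘ σ) = ν

lemma isExchangeable_pi {μ : ι → Measure α} [∀ i, SigmaFinite (μ i)] (hμ : ∀ i j, μ i = μ j) :
    IsExchangeable (Measure.pi μ) := by
  intro σ
  have hσ : ⇑(MeasurableEquiv.piCongrLeft (fun _ : ι => α) σ.symm) = fun v => v ∘ σ := by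
    ext v i
    simp [MeasurableEquiv.piCongrLeft, Equiv.piCongrLeft, Equiv.piCongrLeft']
  have hperm := (measurePreserving_piCongrLeft μ σ.symm).map_eq
  rwa [hσ, show (fun i => μ (σ.symm i)) = μ from funext fun i => hμ _ i] at hperm

lemma ProbabilityTheory.iIndepFun.isExchangeable_map {Ω : Type*} [MeasurableSpace Ω]
    {P : Measure Ω} [IsFiniteMeasure P] {φ : ι → Ω → α} (hindep : iIndepFun φ P)
    (hmeas : ∀ i, AEMeasurable (φ i) P) (hid : ∀ i j, P.map (φ i) = P.map (φ j)) :
    IsExchangeable (P.map fun ω i => φ i ω) :=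
  hindep.map_fun_eq_pi_map hmeas ▸ isExchangeable_pi hid

lemma measurable_rank (i : ι) : Measurable fun v : ι → ℝ => rank v i := by
  simp_rw [rank, card_filter]
  exact Finset.measurable_sum _ fun j _ =>
    Measurable.ite (measurableSet_lt (measurable_pi_apply j) (measurable_pi_apply i))
      measurable_const measurable_const

lemma measurableSet_injective : MeasurableSet {v : ι → ℝ | Injective v} :=
  measurableSet_setOfPred.mpr <| Measurable.forall fun i => Measurable.forall fun j =>
    (measurableSet_eq_fun (measurable_pi_apply i) (measurable_pi_apply j)).mem.imp
      measurable_const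

lemma measurableSet_injective_rank_eq (i : ι) (r : ℕ) :
    MeasurableSet {v : ι → ℝ | Injective v ∧ rank v i = r} :=
  measurableSet_injective.inter (measurable_rank i (measurableSet_singleton r))

variable {ν : Measure (ι → ℝ)}

lemma IsExchangeable.measure_rank_eq (hν : IsExchangeable ν) (i j : ι) (r : ℕ) :
    ν {v | Injective v ∧ rank v i = r} = ν {v | Injective v ∧ rank v j = r} := by
  classical
  have hpre : (fun v : ι → ℝ => v ∘ Equiv.swap i j) ⁻¹' {v | Injective v ∧ rank v i = r}
      = {v | Injective v ∧ rank v j = r} := by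
    ext v
    simp [rank_comp_perm, Injective.of_comp_iff' _ (Equiv.bijective _)]
  have hσ : Measurable fun v : ι → ℝ => v ∘ Equiv.swap i j :=
    measurable_pi_lambda _ fun k => measurable_pi_apply _
  rw [← hpre, ← Measure.map_apply hσ (measurableSet_injective_rank_eq i r), hν]

lemma IsExchangeable.measure_rank_eq_inv_card [IsProbabilityMeasure ν] (hν : IsExchangeable ν)
    (hinj : ∀ᵐ v ∂ν, Injective v) (i : ι) {r : ℕ} (hr : r < Fintype.card ι) :
    ν {v | Injective v ∧ rank v i = r} = (Fintype.card ι : ENNReal)⁻¹ := by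
  have hpartition : ⋃ j, {v : ι → ℝ | Injective v ∧ rank v j = r} = {v | Injective v} := by
    ext v
    simp only [Set.mem_iUnion]
    exact ⟨fun ⟨_, hv, _⟩ => hv, fun hv => (exists_rank_eq hv hr).imp fun _ h => ⟨hv, h⟩⟩
  have hdisj : Pairwise (Disjoint on fun j => {v : ι → ℝ | Injective v ∧ rank v j = r}) :=
    fun j k hjk => Set.disjoint_left.mpr fun v hj hk =>
      hjk (rank_injective hj.1 (hj.2.trans hk.2.symm))
  have hsum : Fintype.card ι * ν {v | Injective v ∧ rank v i = r} = 1 := by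
    rw [← measure_univ (μ := ν), ← measure_congr (ae_eq_univ.mpr hinj), ← hpartition,
      measure_iUnion hdisj (measurableSet_injective_rank_eq · r), tsum_fintype,
      Finset.sum_congr rfl fun j _ => hν.measure_rank_eq j i r, sum_const, card_univ, nsmul_eq_mul]
  exact ENNReal.eq_inv_of_mul_eq_one_left (by rwa [mul_comm])

lemma IsExchangeable.measure_rank_mem_Ico [IsProbabilityMeasure ν] (hν : IsExchangeable ν)
    (hinj : ∀ᵐ v ∂ν, Injective v) (i : ι) {a b : ℕ} (hb : b ≤ Fintype.card ι) :
    ν {v | rank v i ∈ Ico a b} = (b - a : ℕ) / (Fintype.card ι : ENNReal) := by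
  have hae : {v : ι → ℝ | rank v i ∈ Ico a b}
      =ᵐ[ν] ⋃ r ∈ Ico a b, {v | Injective v ∧ rank v i = r} := by
    filter_upwards [hinj] with v hv
    change (v ∈ {v : ι → ℝ | rank v i ∈ Ico a b}) = (v ∈ ⋃ r ∈ Ico a b, _)
    simp [hv]
  have hdisj : Set.PairwiseDisjoint ↑(Ico a b)
      fun r => {v : ι → ℝ | Injective v ∧ rank v i = r} :=
    fun r _ s _ hrs => Set.disjoint_left.mpr fun v hr hs => hrs (hr.2.symm.trans hs.2)
  rw [measure_congr hae,
    measure_biUnion_finset hdisj fun r _ => measurableSet_injective_rank_eq i r,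
    sum_congr rfl fun r hr => hν.measure_rank_eq_inv_card hinj i ((mem_Ico.mp hr).2.trans_le hb),
    sum_const, Nat.card_Ico, nsmul_eq_mul, div_eq_mul_inv]

end Exchangeable

lemma ae_injective_of_measure_eq_zero {Ω ι α : Type*} [MeasurableSpace Ω] [Countable ι]
    {P : Measure Ω} {φ : ι → Ω → α} (hties : ∀ i k, i ≠ k → P {ω | φ i ω = φ k ω} = 0) :
    ∀ᵐ ω ∂P, Injective fun i => φ i ω := by
  simp only [Injective, ae_all_iff]
  intro i k
  by_cases hik : i = k
  · exact .of_forall fun _ _ => hik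
  · filter_upwards [measure_eq_zero_iff_ae_notMem.mp (hties i k hik)] with ω hω h
    exact absurd h hω

lemma rank_last_mem_Ico_of_orderStat {m ℓ u : ℕ} {v : Fin (m + 1) → ℝ} (hv : Injective v)
    (hℓ : 1 ≤ ℓ) (hℓu : ℓ ≤ u) (hum : u ≤ m)
    (hlo : orderStat m (v ∘ Fin.castSucc) ℓ ≤ v (Fin.last m))
    (hhi : v (Fin.last m) ≤ orderStat m (v ∘ Fin.castSucc) u) :
    rank v (Fin.last m) ∈ Ico ℓ u := by
  have hne : ∀ i : Fin m, v i.castSucc ≠ v (Fin.last m) :=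
    fun i => hv.ne (Fin.castSucc_lt_last i).ne
  rw [rank_last, mem_Ico]
  exact ⟨le_card_filter_lt_of_orderStat_le hℓ (hℓu.trans hum) hne hlo,
    card_filter_lt_lt_of_le_orderStat (hℓ.trans hℓu) hum hhi⟩

lemma natCeil_sub_natCeil_div_le {n α : ℝ} (hn : 0 < n) (hu : 0 < ⌈n * (1 - α / 2)⌉₊)
    (hℓu : ⌈n * α / 2⌉₊ ≤ ⌈n * (1 - α / 2)⌉₊) :
    ((⌈n * (1 - α / 2)⌉₊ - ⌈n * α / 2⌉₊ : ℕ) : ℝ) / n ≤ 1 - α + 2 / n := by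
  have hceil_u := Nat.ceil_lt_add_one (Nat.ceil_pos.mp hu).le
  have hceil_ℓ := Nat.le_ceil (n * α / 2)
  rw [div_le_iff₀ hn, add_mul, div_mul_cancel₀ _ hn.ne', Nat.cast_sub hℓu]
  linarith

theorem split_conformal_coverage_upper_general {Ω : Type*} [MeasurableSpace Ω]
    (P : MeasureTheory.Measure Ω) [MeasureTheory.IsProbabilityMeasure P]
    (m : ℕ) (φ : Fin (m + 1) → Ω → ℝ)
    (hmeas : ∀ i, Measurable (φ i))
    (hindep : ProbabilityTheory.iIndepFun φ P)
    (hid : ∀ i k : Fin (m + 1),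
      MeasureTheory.Measure.map (φ i) P = MeasureTheory.Measure.map (φ k) P)
    (hties : ∀ i k : Fin (m + 1), i ≠ k → P {ω | φ i ω = φ k ω} = 0)
    (α : ℝ)
    (ℓ u : ℕ)
    (hℓ : ℓ = ⌈((m : ℝ) + 1) * α / 2⌉₊)
    (hu : u = ⌈((m : ℝ) + 1) * (1 - α / 2)⌉₊)
    (hℓ1 : 1 ≤ ℓ) (hℓu : ℓ ≤ u) (hum : u ≤ m) :
    (P {ω | orderStat m (fun i => φ i.castSucc ω) ℓ ≤ φ (Fin.last m) ω ∧
            φ (Fin.last m) ω ≤ orderStat m (fun i => φ i.castSucc ω) u}).toReal ≤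
      1 - α + 2 / ((m : ℝ) + 1) := by
  set C := {ω | orderStat m (fun i => φ i.castSucc ω) ℓ ≤ φ (Fin.last m) ω ∧
    φ (Fin.last m) ω ≤ orderStat m (fun i => φ i.castSucc ω) u}
  set X : Ω → Fin (m + 1) → ℝ := fun ω i => φ i ω
  have hX : Measurable X := measurable_pi_lambda _ hmeas
  have : IsProbabilityMeasure (P.map X) := Measure.isProbabilityMeasure_map hX.aemeasurable
  have hinj : ∀ᵐ ω ∂P, Injective (X ω) := ae_injective_of_measure_eq_zero hties
  have hprob : P C ≤ (u - ℓ : ℕ) / (m + 1 : ℕ) := calc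
    P C ≤ P (X ⁻¹' {v | rank v (Fin.last m) ∈ Ico ℓ u}) := by
      refine measure_mono_ae ?_
      filter_upwards [hinj] with ω hω hcov
      exact rank_last_mem_Ico_of_orderStat hω hℓ1 hℓu hum hcov.1 hcov.2
    _ = P.map X {v | rank v (Fin.last m) ∈ Ico ℓ u} :=
      (Measure.map_apply hX (measurable_rank _ (by simp))).symm
    _ = (u - ℓ : ℕ) / (m + 1 : ℕ) := by
      simpa using (hindep.isExchangeable_map (fun i => (hmeas i).aemeasurable) hid)
        |>.measure_rank_mem_Ico ((ae_map_iff hX.aemeasurable measurableSet_injective).mpr hinj)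
          (Fin.last m) (b := u) (by simp; omega)
  calc (P C).toReal ≤ (((u - ℓ : ℕ) / (m + 1 : ℕ) : ENNReal)).toReal :=
        ENNReal.toReal_mono (ENNReal.div_ne_top (ENNReal.natCast_ne_top _) (by positivity)) hprob
    _ = (u - ℓ : ℕ) / ((m : ℝ) + 1) := by
      rw [ENNReal.toReal_div, ENNReal.toReal_natCast, ENNReal.toReal_natCast, Nat.cast_succ]
    _ ≤ 1 - α + 2 / ((m : ℝ) + 1) := by
      subst hℓ hu
      exact natCeil_sub_natCeil_div_le (by positivity) (by omega) hℓu

/-- split conformal coverage (upper bound under continuity). -/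
theorem split_conformal_coverage_upper {Ω : Type*} [MeasurableSpace Ω]
    (P : MeasureTheory.Measure Ω) [MeasureTheory.IsProbabilityMeasure P]
    (m : ℕ) (hm : 1 ≤ m) (φ : Fin (m + 1) → Ω → ℝ)
    (hmeas : ∀ i, Measurable (φ i))
    (hindep : ProbabilityTheory.iIndepFun φ P)
    (hid : ∀ i k : Fin (m + 1),
      MeasureTheory.Measure.map (φ i) P = MeasureTheory.Measure.map (φ k) P)
    (hties : ∀ i k : Fin (m + 1), i ≠ k → P {ω | φ i ω = φ k ω} = 0)
    (α : ℝ) (hα : α ∈ Set.Ioo (0 : ℝ) 1)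
    (ℓ u : ℕ)
    (hℓ : ℓ = ⌈((m : ℝ) + 1) * α / 2⌉₊)
    (hu : u = ⌈((m : ℝ) + 1) * (1 - α / 2)⌉₊)
    (hℓ1 : 1 ≤ ℓ) (hℓu : ℓ ≤ u) (hum : u ≤ m) :
    (P {ω | orderStat m (fun i => φ i.castSucc ω) ℓ ≤ φ (Fin.last m) ω ∧
            φ (Fin.last m) ω ≤ orderStat m (fun i => φ i.castSucc ω) u}).toReal ≤
      1 - α + 2 / ((m : ℝ) + 1) :=
  split_conformal_coverage_upper_general P m φ hmeas hindep hid hties α ℓ u hℓ hu hℓ1 hℓu hum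
end
end
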